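/- arXiv:2007.08280 — 2 statements merged into one kernel-verified Lean document; each statement's English description precedes it below -/
import Mathlib

section
/- Let k ⊆ ℂ be a subfield, k₀ = k ∩ ℝ, k̄ the algebraic closure of k in ℂ, and k̃ the real closure of k₀ in ℝ. Then the following are equivalent: (1) k is algebraic over k₀; (2) k̄ is algebraic over k₀; (3) k̄ is algebraic over k̃; (4) [k̄ : k̃] = 2. -/
/-!
Complex conjugation fixes a real subfield `R ⊆ ℂ`, so if `x` is algebraic over `R` then so are
`re x = (x + x̄)/2` and `im x = re (-i x)`. Since `k̃` contains every real number algebraic over it,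
algebraicity of `k̄` over `k̃` puts the real and imaginary parts of every element of `k̄` into `k̃`,
so `k̄ = k̃ ⊕ k̃ i` has dimension `2`; conversely a finite extension is algebraic. The remaining
equivalences are transitivity of algebraicity along the towers `k₀ ≤ k ≤ k̄` and `k₀ ≤ k̃ ≤ k̄`.
-/

/-- `x ∈ ℂ` is algebraic over the subfield `K ⊆ ℂ`: it is a root of a nonzero polynomial
with coefficients in `K`. -/
def AlgebraicOver (K : Subfield ℂ) (x : ℂ) : Prop :=
  ∃ p : Polynomial ℂ, p ≠ 0 ∧ (∀ n, p.coeff n ∈ K) ∧ Polynomial.eval x p = 0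

open Polynomial

theorem algebraicOver_iff_isAlgebraic {K : Subfield ℂ} {x : ℂ} :
    AlgebraicOver K x ↔ IsAlgebraic K x := by
  constructor
  · rintro ⟨p, hp0, hcoeff, hx⟩
    obtain ⟨q, rfl⟩ := (mem_lifts p).mp <|
      (lifts_iff_coeff_lifts (f := algebraMap K ℂ) p).mpr fun n => ⟨⟨p.coeff n, hcoeff n⟩, rfl⟩
    exact ⟨q, fun hq => hp0 (by rw [hq, Polynomial.map_zero]),
      by rwa [aeval_def, eval₂_eq_eval_map]⟩
  · rintro ⟨q, hq0, hx⟩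
    refine ⟨q.map (algebraMap K ℂ), Polynomial.map_ne_zero hq0, fun n => ?_,
      by rwa [eval_map, ← aeval_def]⟩
    rw [coeff_map]
    exact (q.coeff n).2

theorem algebraicOver_I {K : Subfield ℂ} : AlgebraicOver K Complex.I :=
  algebraicOver_iff_isAlgebraic.mpr <| IsAlgebraic.of_pow two_pos <| by
    simpa using isAlgebraic_intCast (R := K) (A := ℂ) (-1)

namespace AlgebraicOver

variable {K L : Subfield ℂ} {x : ℂ}

theorem of_mem (hx : x ∈ K) : AlgebraicOver K x :=
  algebraicOver_iff_isAlgebraic.mpr (isAlgebraic_algebraMap (⟨x, hx⟩ : K))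

theorem mono (hx : AlgebraicOver K x) (h : K ≤ L) : AlgebraicOver L x :=
  let ⟨p, hp0, hcoeff, hpx⟩ := hx
  ⟨p, hp0, fun n => h (hcoeff n), hpx⟩

theorem restrictScalars (hx : AlgebraicOver L x) (h : K ≤ L)
    (hL : ∀ y ∈ L, AlgebraicOver K y) : AlgebraicOver K x := by
  let : Algebra K L := (Subfield.inclusion h).toAlgebra
  have : IsScalarTower K L ℂ := .of_algebraMap_eq fun _ => rfl
  have : Algebra.IsAlgebraic K L := ⟨fun y => (isAlgebraic_algebraMap_iff (A := ℂ)
    Subtype.val_injective).mp (algebraicOver_iff_isAlgebraic.mp (hL y y.2))⟩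
  exact algebraicOver_iff_isAlgebraic.mpr
    ((algebraicOver_iff_isAlgebraic.mp hx).restrictScalars K)

theorem conj (hK : ∀ y ∈ K, ∃ r : ℝ, (r : ℂ) = y) (hx : AlgebraicOver K x) :
    AlgebraicOver K (starRingEnd ℂ x) := by
  obtain ⟨p, hp0, hcoeff, hpx⟩ := hx
  refine ⟨p.map (starRingEnd ℂ), Polynomial.map_ne_zero hp0, fun n => ?_, ?_⟩
  · obtain ⟨r, hr⟩ := hK _ (hcoeff n)
    rw [coeff_map, ← hr, Complex.conj_ofReal, hr]
    exact hcoeff n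
  · rw [eval_map, eval₂_hom, hpx, map_zero]

theorem re_mem (hK : ∀ y ∈ K, ∃ r : ℝ, (r : ℂ) = y)
    (hclosed : ∀ r : ℝ, AlgebraicOver K r → (r : ℂ) ∈ K) (hx : AlgebraicOver K x) :
    (x.re : ℂ) ∈ K := by
  refine hclosed _ (algebraicOver_iff_isAlgebraic.mpr ?_)
  have hre : (x.re : ℂ) = (2⁻¹ : K) • (x + starRingEnd ℂ x) := by
    rw [Complex.add_conj, Algebra.smul_def, map_inv₀, map_ofNat]
    push_cast
    ring
  rw [hre]
  exact ((algebraicOver_iff_isAlgebraic.mp hx).add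
    (algebraicOver_iff_isAlgebraic.mp (hx.conj hK))).smul _

theorem im_mem (hK : ∀ y ∈ K, ∃ r : ℝ, (r : ℂ) = y)
    (hclosed : ∀ r : ℝ, AlgebraicOver K r → (r : ℂ) ∈ K) (hx : AlgebraicOver K x) :
    (x.im : ℂ) ∈ K := by
  have hIx : IsAlgebraic K (-Complex.I * x) :=
    (algebraicOver_iff_isAlgebraic.mp algebraicOver_I).neg.mul
      (algebraicOver_iff_isAlgebraic.mp hx)
  simpa using (algebraicOver_iff_isAlgebraic.mpr hIx).re_mem hK hclosed

variable [Algebra K L] [IsScalarTower K L ℂ]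

theorem of_mem_of_finiteDimensional [FiniteDimensional K L] (hx : x ∈ L) :
    AlgebraicOver K x :=
  algebraicOver_iff_isAlgebraic.mpr <| (isAlgebraic_algebraMap_iff (A := ℂ)
    Subtype.val_injective).mpr (IsAlgebraic.of_finite K (⟨x, hx⟩ : L))

end AlgebraicOver

section
variable {R L : Subfield ℂ} [Algebra R L] [IsScalarTower R L ℂ]

theorem Subfield.coe_smul_of_isScalarTower (a : R) (x : L) : ((a • x : L) : ℂ) = a * x := by
  rw [Algebra.smul_def, Subfield.coe_mul]
  exact congrArg (· * (x : ℂ)) (IsScalarTower.algebraMap_apply R L ℂ a).symm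

theorem finrank_eq_two_of_re_im_mem (hR : ∀ y ∈ R, ∃ r : ℝ, (r : ℂ) = y) (hI : Complex.I ∈ L)
    (hreim : ∀ x ∈ L, (x.re : ℂ) ∈ R ∧ (x.im : ℂ) ∈ R) : Module.finrank R L = 2 := by
  let i : L := ⟨Complex.I, hI⟩
  have hli : LinearIndependent R ![1, i] := by
    refine LinearIndependent.pair_iff.mpr fun s t hst => ?_
    obtain ⟨a, ha⟩ := hR s s.2
    obtain ⟨b, hb⟩ := hR t t.2
    have h : (a : ℂ) + b * Complex.I = 0 := by
      simpa [Subfield.coe_smul_of_isScalarTower, ha, hb, i] using congrArg Subtype.val hst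
    have ha0 : a = 0 := by simpa using congrArg Complex.re h
    have hb0 : b = 0 := by simpa using congrArg Complex.im h
    exact ⟨Subtype.ext (by simp [← ha, ha0]), Subtype.ext (by simp [← hb, hb0])⟩
  have hspan : ⊤ ≤ Submodule.span R (Set.range ![1, i]) := by
    rintro x -
    rw [Matrix.range_cons_cons_empty, Submodule.mem_span_pair]
    obtain ⟨hre, him⟩ := hreim x x.2
    refine ⟨⟨_, hre⟩, ⟨_, him⟩, Subtype.ext ?_⟩
    simp [Subfield.coe_smul_of_isScalarTower, i, Complex.re_add_im]
  rw [Module.finrank_eq_card_basis (.mk hli hspan), Fintype.card_fin]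

theorem forall_algebraicOver_iff_finrank_eq_two (hR : ∀ y ∈ R, ∃ r : ℝ, (r : ℂ) = y)
    (hclosed : ∀ r : ℝ, AlgebraicOver R r → (r : ℂ) ∈ R) (hI : Complex.I ∈ L) :
    (∀ x ∈ L, AlgebraicOver R x) ↔ Module.finrank R L = 2 := by
  refine ⟨fun h => finrank_eq_two_of_re_im_mem hR hI fun x hx =>
    ⟨(h x hx).re_mem hR hclosed, (h x hx).im_mem hR hclosed⟩, fun h x hx => ?_⟩
  have : FiniteDimensional R L := .of_finrank_pos (by omega)
  exact .of_mem_of_finiteDimensional hx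

end

/-- For a subfield `k ⊆ ℂ`, with `k₀ = k ∩ ℝ`, `k̄` the algebraic closure of `k` in `ℂ` and
`k̃` the real closure of `k₀` in `ℝ`, the following are equivalent: (1) `k/k₀` is algebraic;
(2) `k̄/k₀` is algebraic; (3) `k̄/k̃` is algebraic; (4) `[k̄ : k̃] = 2`. -/
theorem stmt0 (k k0 kbar ktilde : Subfield ℂ)
    (hk0 : ∀ x : ℂ, x ∈ k0 ↔ x ∈ k ∧ ∃ r : ℝ, (r : ℂ) = x)
    (hkbar : ∀ x : ℂ, x ∈ kbar ↔ AlgebraicOver k x)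
    (hktilde : ∀ x : ℂ, x ∈ ktilde ↔ (∃ r : ℝ, (r : ℂ) = x) ∧ AlgebraicOver k0 x)
    (hle : ktilde ≤ kbar) :
    ((∀ x ∈ k, AlgebraicOver k0 x) ↔ (∀ x ∈ kbar, AlgebraicOver k0 x)) ∧
    ((∀ x ∈ kbar, AlgebraicOver k0 x) ↔ (∀ x ∈ kbar, AlgebraicOver ktilde x)) ∧
    ((∀ x ∈ kbar, AlgebraicOver ktilde x) ↔
      (letI : Algebra ktilde kbar := (Subfield.inclusion hle).toAlgebra
       Module.finrank ktilde kbar = 2)) := by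
  have hk0k : k0 ≤ k := fun x hx => ((hk0 x).mp hx).1
  have hk0t : k0 ≤ ktilde := fun x hx => (hktilde x).mpr ⟨((hk0 x).mp hx).2, .of_mem hx⟩
  have hkt_alg : ∀ y ∈ ktilde, AlgebraicOver k0 y := fun y hy => ((hktilde y).mp hy).2
  refine ⟨⟨fun h x hx => ((hkbar x).mp hx).restrictScalars hk0k h,
      fun h x hx => h x ((hkbar x).mpr (.of_mem hx))⟩,
    ⟨fun h x hx => (h x hx).mono hk0t, fun h x hx => (h x hx).restrictScalars hk0t hkt_alg⟩, ?_⟩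
  let : Algebra ktilde kbar := (Subfield.inclusion hle).toAlgebra
  have : IsScalarTower ktilde kbar ℂ := .of_algebraMap_eq fun _ => rfl
  exact forall_algebraicOver_iff_finrank_eq_two (fun y hy => ((hktilde y).mp hy).1)
    (fun r hr => (hktilde r).mpr ⟨⟨r, rfl⟩, hr.restrictScalars hk0t hkt_alg⟩)
    ((hkbar _).mpr algebraicOver_I)
end

section
/- There exists an example showing the intersection with ℝ of a subfield of ℂ can be ℚ even when the field has transcendence degree 1: if a, b ∈ ℝ are such that trdeg_ℚ ℚ(a,b) = 2, then ℚ(a + b·i) ∩ ℝ = ℚ. -/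
/-!
Write `z = a + b i`, so that `w = a - b i` is its complex conjugate. Over the algebraic numbers,
which contain `i`, the pair `(z, w)` is an invertible linear change of the algebraically
independent pair `(a, b)`, so `z` and `w` are algebraically independent over `ℚ`. A real element
of `ℚ(z)` is fixed by conjugation, hence lies in `ℚ(z) ∩ ℚ(w)`; and if `x = P(w)/Q(w)` lies in
`ℚ(z)`, then `w` is a root of `P - x Q` over `ℚ(z)`, so transcendence of `w` over `ℚ(z)` forces
`P = x Q` and `x ∈ ℚ`.
-/

open IntermediateField

section ChangeOfVariables

open MvPolynomial

theorem AlgebraicIndependent.aeval_of_injective_bind₁ {ι R A : Type*} [CommRing R] [CommRing A]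
    [Algebra R A] {x : ι → A} (hx : AlgebraicIndependent R x) {p : ι → MvPolynomial ι R}
    (hp : Function.Injective (bind₁ p)) : AlgebraicIndependent R fun i => aeval x (p i) := by
  have : ⇑(aeval fun i => aeval x (p i)) = aeval x ∘ bind₁ p :=
    funext fun φ => (aeval_bind₁ x p φ).symm
  rw [AlgebraicIndependent, this]
  exact Function.Injective.comp hx hp

theorem MvPolynomial.bind₁_add_mul_sub_mul_injective {K : Type*} [Field K] {i : K}
    (hi : i * i = -1) (h2 : (2 : K) ≠ 0) :
    Function.Injective (bind₁ ![X 0 + C i * X 1, X 0 - C i * X 1] :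
      MvPolynomial (Fin 2) K →ₐ[K] MvPolynomial (Fin 2) K) := by
  set q : Fin 2 → MvPolynomial (Fin 2) K := ![C 2⁻¹ * (X 0 + X 1), C (-i / 2) * (X 0 - X 1)]
  have hinv : (fun j => bind₁ q (![X 0 + C i * X 1, X 0 - C i * X 1] j)) = X := by
    have hC : C i * C (-i / 2) = (C 2⁻¹ : MvPolynomial (Fin 2) K) := by
      rw [← map_mul]; congr 1; field_simp; linear_combination -hi
    have h2' : (C 2⁻¹ : MvPolynomial (Fin 2) K) * 2 = 1 := by
      rw [← map_ofNat C 2, ← map_mul, inv_mul_cancel₀ h2, map_one]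
    ext1 j
    fin_cases j <;>
      simp only [q, Fin.zero_eta, Fin.mk_one, Matrix.cons_val_zero, Matrix.cons_val_one,
        Matrix.cons_val_fin_one, map_add, map_sub, map_mul, bind₁_X_right, algHom_C, algebraMap_eq]
    · linear_combination (X 0 - X 1) * hC + X 0 * h2'
    · linear_combination -(X 0 - X 1) * hC + X 1 * h2'
  refine Function.LeftInverse.injective (g := bind₁ q) fun φ => ?_
  rw [bind₁_bind₁, hinv, bind₁_X_left, AlgHom.id_apply]

theorem AlgebraicIndependent.add_smul_sub_smul {K A : Type*} [Field K] [CommRing A] [Algebra K A]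
    {a b : A} (hab : AlgebraicIndependent K ![a, b]) {i : K} (hi : i * i = -1) (h2 : (2 : K) ≠ 0) :
    AlgebraicIndependent K ![a + i • b, a - i • b] := by
  convert hab.aeval_of_injective_bind₁ (bind₁_add_mul_sub_mul_injective hi h2) using 1
  ext j
  fin_cases j <;> simp [Algebra.smul_def]

end ChangeOfVariables

theorem Complex.algebraicIndependent_ofReal_add_mul_I {a b : ℝ}
    (hab : AlgebraicIndependent ℚ ![a, b]) :
    AlgebraicIndependent ℚ ![(a : ℂ) + b * I, a - b * I] := by
  set K := algebraicClosure ℚ ℂ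
  have hI : I ∈ K := mem_algebraicClosure_iff'.2 <|
    .of_pow two_pos (by rw [I_sq]; exact isIntegral_one.neg)
  have hab' : AlgebraicIndependent K ![(a : ℂ), b] := by
    have : AlgebraicIndependent ℚ ![(a : ℂ), b] := by
      convert hab.map' (f := ofRealAm.restrictScalars ℚ) ofReal_injective
      ext j; fin_cases j <;> rfl
    exact this.algebraicClosure
  have := hab'.add_smul_sub_smul (i := ⟨I, hI⟩) (Subtype.ext I_mul_I) two_ne_zero
  convert this.restrictScalars (algebraMap ℚ K).injective using 1
  simp [Algebra.smul_def, mul_comm]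

open Polynomial in
theorem IntermediateField.inf_adjoin_simple_eq_bot_of_transcendental {F L : Type*} [Field F]
    [Field L] [Algebra F L] {E : IntermediateField F L} {y : L} (hy : Transcendental E y) :
    E ⊓ F⟮y⟯ = ⊥ := by
  refine eq_bot_iff.mpr fun u ⟨huE, huy⟩ => ?_
  obtain ⟨P, Q, rfl⟩ := (mem_adjoin_simple_iff F u).mp huy
  by_cases hQy : aeval y Q = 0
  · simp [hQy]
  have hQ : (algebraMap F L) Q.leadingCoeff ≠ 0 := by
    rw [_root_.map_ne_zero, leadingCoeff_ne_zero]
    rintro rfl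
    simp at hQy
  set R : E[X] := P.map (algebraMap F E) - C ⟨_, huE⟩ * Q.map (algebraMap F E)
  have hR : R = 0 := transcendental_iff.mp hy R (by
    simp [R, aeval_map_algebraMap, div_mul_cancel₀ _ hQy])
  have hcoeff := congrArg (fun p => algebraMap E L (p.coeff Q.natDegree)) hR
  simp only [R, coeff_sub, coeff_map, coeff_C_mul, coeff_natDegree, algebraMap_apply,
    AddSubgroupClass.coe_sub, SubalgebraClass.coe_algebraMap, IntermediateField.coe_mul, coeff_zero,
    ZeroMemClass.coe_zero] at hcoeff
  refine mem_bot.mpr ⟨P.coeff Q.natDegree / Q.leadingCoeff, ?_⟩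
  rw [map_div₀, div_eq_iff hQ]
  linear_combination hcoeff

theorem AlgebraicIndependent.adjoin_simple_inf_adjoin_simple_eq_bot {F L : Type*} [Field F]
    [Field L] [Algebra F L] {x y : L} (hxy : AlgebraicIndependent F ![x, y]) :
    F⟮x⟯ ⊓ F⟮y⟯ = ⊥ := by
  refine inf_adjoin_simple_eq_bot_of_transcendental
    (IntermediateField.transcendental_adjoin_iff.mpr ?_)
  have := hxy.transcendental_adjoin (s := {0}) (i := 1) (by simp)
  rwa [Set.image_singleton] at this

/-- If `a, b ∈ ℝ` are algebraically independent over `ℚ` (i.e. `trdeg_ℚ ℚ(a,b) = 2`),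
then `ℚ(a + b·i) ∩ ℝ = ℚ` inside `ℂ`. -/
theorem stmt2 (a b : ℝ) (h : AlgebraicIndependent ℚ ![a, b]) :
    Subfield.closure {(a : ℂ) + (b : ℂ) * Complex.I} ⊓ Complex.ofRealHom.fieldRange =
      (algebraMap ℚ ℂ).fieldRange := by
  set z : ℂ := a + b * Complex.I
  apply le_antisymm
  · rintro _ ⟨hrz, r, rfl⟩
    have hz : (r : ℂ) ∈ ℚ⟮z⟯ := (Subfield.closure_le (t := ℚ⟮z⟯.toSubfield)).mpr
      (Set.singleton_subset_iff.mpr (mem_adjoin_simple_self ℚ z)) hrz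
    have hw : (r : ℂ) ∈ ℚ⟮(a : ℂ) - b * Complex.I⟯ := by
      have hconj : (starRingEnd ℂ).toRatAlgHom z = a - b * Complex.I := by
        simp only [z, RingHom.toRatAlgHom_apply, map_add, map_mul, Complex.conj_ofReal,
          Complex.conj_I, mul_neg, ← sub_eq_add_neg]
      rw [← hconj, ← Set.image_singleton, ← adjoin_map, ← Complex.conj_ofReal r]
      exact (mem_map _).mpr ⟨_, hz, rfl⟩
    have hbot :=
      (Complex.algebraicIndependent_ofReal_add_mul_I h).adjoin_simple_inf_adjoin_simple_eq_bot
    exact mem_bot.mp (hbot ▸ mem_inf.mpr ⟨hz, hw⟩)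
  · rintro _ ⟨q, rfl⟩
    exact ⟨by simp [SubfieldClass.ratCast_mem], q, by simp⟩
end
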